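/- If the full automorphism group of a Hamiltonian cycle system of order 2n+1 has even order, then either it contains a unique involution (i.e., it is a binary group), or 2n+1 is prime and the full automorphism group is isomorphic to AGL(1, 2n+1). -/

import Mathlib

open Pointwise

variable {V : Type*}

/-- The action of a permutation on a simple graph by relabelling vertices. -/
instance permGraphAction : MulAction (Equiv.Perm V) (SimpleGraph V) where
  smul σ H := H.map σ.toEmbedding
  one_smul H := by
    show H.map (1 : Equiv.Perm V).toEmbedding = H
    ext a b
    simp [SimpleGraph.map_adj]
  mul_smul σ τ H := by
    ext a b
    show (H.map (σ * τ).toEmbedding).Adj a b ↔ ((H.map τ.toEmbedding).map σ.toEmbedding).Adj a b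
    simp only [SimpleGraph.map_adj, Equiv.coe_toEmbedding, Equiv.Perm.coe_mul,
      Function.comp_apply]
    rw [SimpleGraph.map_map]

lemma perm_smul_graph (σ : Equiv.Perm V) (H : SimpleGraph V) :
    σ • H = H.map σ.toEmbedding := rfl

/-- A Hamiltonian cycle of the complete graph on `V`: a connected, 2-regular
(spanning) subgraph. -/
def IsHamCycle [Fintype V] (H : SimpleGraph V) : Prop :=
  H.Connected ∧ ∀ v : V, (H.neighborSet v).ncard = 2

/-- A Hamiltonian cycle system: a set of Hamiltonian cycles whose edge sets
partition the edge set of the complete graph. -/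
def IsHCS [Fintype V] (𝓗 : Set (SimpleGraph V)) : Prop :=
  (∀ H ∈ 𝓗, IsHamCycle H) ∧
    ∀ e ∈ (⊤ : SimpleGraph V).edgeSet, ∃! H, H ∈ 𝓗 ∧ e ∈ H.edgeSet

/-- The full automorphism group of a Hamiltonian cycle system, as the subgroup
of vertex permutations preserving the set of cycles. -/
def autHCS (𝓗 : Set (SimpleGraph V)) : Subgroup (Equiv.Perm V) :=
  MulAction.stabilizer (Equiv.Perm V) 𝓗

/-- The cycle graph traced by a map from `ZMod m` (consecutive residues are adjacent). -/
def cycleOn {W : Type*} (m : ℕ) (f : ZMod m → W) : SimpleGraph W :=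
  SimpleGraph.fromRel (fun a b => ∃ i : ZMod m, f i = a ∧ f (i + 1) = b)

/-!
Write `m = 2n + 1`. Labelling a Hamiltonian cycle by `ZMod m`, its automorphisms are the maps
`x ↦ ±x + c`. An automorphism of the HCS fixing two points fixes the cycle through them, hence is
trivial. So an involution `σ` fixes exactly one point, and the `2n` edges `{x, σ x}` lie in
`σ`-invariant cycles, on which `σ` is a reflection with at most one such edge; as there are `n`
cycles, `σ` fixes all of them. For two distinct involutions `σ, τ`, the product `σ τ` is then a
nontrivial rotation of every cycle. Labelling `V` by `ZMod m` so that `σ τ` becomes `x ↦ x + 1`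
exhibits the cycles as exactly the images of the standard cycle under `AGL(1, m)`. Each nonzero
residue is then a step of some cycle, hence a unit, so `m` is prime, and conjugating by the
labelling identifies the automorphism group with `AGL(1, m)`, using rigidity once more.
-/

open SimpleGraph Function
open scoped Finset

namespace ZMod

variable {m : ℕ}

lemma two_ne_zero_of_two_lt (hm : 2 < m) : (2 : ZMod m) ≠ 0 := by
  have : ((2 : ℕ) : ZMod m) ≠ 0 := by
    rw [Ne, ZMod.natCast_eq_zero_iff]
    exact fun h => absurd (Nat.le_of_dvd two_pos h) (by omega)
  exact_mod_cast this

lemma isUnit_two_of_odd (hm : Odd m) : IsUnit (2 : ZMod m) := by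
  have := (ZMod.isUnit_iff_coprime 2 m).mpr (Nat.coprime_two_left.mpr hm)
  exact_mod_cast this

lemma eq_zero_of_two_mul_eq_zero (hm : Odd m) {x : ZMod m} (hx : 2 * x = 0) : x = 0 :=
  (isUnit_two_of_odd hm).mul_right_eq_zero.mp hx

lemma eq_mul_add_of_forall_add_one [NeZero m] {θ : ZMod m → ZMod m} {c : ZMod m}
    (hθ : ∀ x, θ (x + 1) = θ x + c) (x : ZMod m) : θ x = c * x + θ 0 := by
  have hnat : ∀ k : ℕ, θ k = c * k + θ 0 := by
    intro k
    induction k with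
    | zero => simp
    | succ k ih => push_cast; rw [hθ, ih]; ring
  simpa using hnat x.val

lemma exists_affine_of_injective_of_succ (hm : 2 < m) {ψ : ZMod m → ZMod m} (hψ : Injective ψ)
    (hsucc : ∀ x, ψ (x + 1) - ψ x = 1 ∨ ψ (x + 1) - ψ x = -1) :
    ∃ δ : ZMod m, (δ = 1 ∨ δ = -1) ∧ ∀ x, ψ x = δ * x + ψ 0 := by
  have : NeZero m := ⟨by omega⟩
  have h2 := two_ne_zero_of_two_lt hm
  set δ := ψ 1 - ψ 0
  have hstep : ∀ k : ℕ, ψ (k + 1) - ψ k = δ := by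
    intro k
    induction k with
    | zero => simp [δ]
    | succ k ih =>
      have hk2 : ψ (k + 1 + 1) ≠ ψ k := fun h => h2 (by linear_combination hψ h)
      push_cast
      rcases hsucc (k + 1) with h | h <;> rcases hsucc k with h' | h'
      · rw [h, ← ih, h']
      · exact absurd (by linear_combination h + h') hk2
      · exact absurd (by linear_combination h + h') hk2
      · rw [h, ← ih, h']
  refine ⟨δ, (hsucc 0).imp (by simpa using ·) (by simpa using ·),
    eq_mul_add_of_forall_add_one fun x => ?_⟩
  rw [← ZMod.natCast_zmod_val x]
  linear_combination hstep x.val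

lemma prime_of_forall_ne_zero_isUnit (hm : 1 < m) (h : ∀ x : ZMod m, x ≠ 0 → IsUnit x) :
    m.Prime := by
  by_contra hnp
  obtain ⟨q, hqm, hq, hqm'⟩ := Nat.exists_dvd_of_not_prime2 hm hnp
  have hq0 : (q : ZMod m) ≠ 0 := by
    rw [Ne, ZMod.natCast_eq_zero_iff]
    exact fun h => absurd (Nat.le_of_dvd (by omega) h) (by omega)
  have := Nat.Coprime.eq_one_of_dvd ((ZMod.isUnit_iff_coprime q m).mp (h _ hq0)) hqm
  omega

end ZMod

section AffineEquiv

variable {R : Type*} [CommRing R]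

lemma AffineEquiv.exists_units_apply_eq (A : R ≃ᵃ[R] R) : ∃ a : Rˣ, ∀ x, A x = a * x + A 0 := by
  have hlin : ∀ x, A.linear x = x * A.linear 1 := fun x => by
    simpa using A.linear.map_smul x 1
  have hA : ∀ x, A x = A.linear 1 * x + A 0 := fun x => by
    have := A.toAffineMap.linearMap_vsub x 0
    simp only [vsub_eq_sub, sub_zero, AffineEquiv.linear_toAffineMap,
      AffineEquiv.coe_toAffineMap, LinearEquiv.coe_coe] at this
    rw [mul_comm, ← hlin, this]
    ring
  have hunit : A.linear 1 * A.linear.symm 1 = 1 := by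
    rw [mul_comm, ← hlin, LinearEquiv.apply_symm_apply]
  exact ⟨⟨_, _, hunit, by rw [mul_comm, hunit]⟩, hA⟩

lemma AffineEquiv.exists_apply_eq (a : Rˣ) (b : R) : ∃ A : R ≃ᵃ[R] R, ∀ x, A x = a * x + b :=
  ⟨AffineEquiv.constVAdd R R b * AffineEquiv.homothetyUnitsMulHom 0 a, fun x => by
    simp [AffineMap.homothety_apply, add_comm]⟩

end AffineEquiv

section CycleOn

variable {W : Type*} {m : ℕ}

lemma cycleOn_adj_apply (hm : 1 < m) {f : ZMod m → W} (hf : Injective f) {x y : ZMod m} :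
    (cycleOn m f).Adj (f x) (f y) ↔ y - x = 1 ∨ y - x = -1 := by
  have : Fact (1 < m) := ⟨hm⟩
  simp only [cycleOn, fromRel_adj, hf.eq_iff, ne_eq, exists_eq_left]
  constructor
  · rintro ⟨-, rfl | rfl⟩
    · left; ring
    · right; ring
  · rintro (h | h)
    · refine ⟨fun hxy => ?_, Or.inl (by linear_combination -h)⟩
      subst hxy; simp at h
    · refine ⟨fun hxy => ?_, Or.inr (by linear_combination h)⟩
      subst hxy; simp at h

lemma cycleOn_comp_add_right (f : ZMod m → W) (b : ZMod m) :
    cycleOn m (fun x => f (x + b)) = cycleOn m f := by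
  have key : ∀ u v, (∃ i, f (i + b) = u ∧ f (i + 1 + b) = v) ↔ ∃ i, f i = u ∧ f (i + 1) = v :=
    fun u v => ⟨fun ⟨i, h⟩ => ⟨i + b, by rwa [add_right_comm]⟩,
      fun ⟨i, h⟩ => ⟨i - b, by simpa [add_right_comm] using h⟩⟩
  ext u v
  simp only [cycleOn, fromRel_adj, key]

lemma cycleOn_comp_neg (f : ZMod m → W) : cycleOn m (fun x => f (-x)) = cycleOn m f := by
  have key : ∀ u v, (∃ i, f (-i) = u ∧ f (-(i + 1)) = v) ↔ ∃ i, f i = v ∧ f (i + 1) = u :=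
    fun u v => ⟨fun ⟨i, h⟩ => ⟨-(i + 1), by simpa [and_comm] using h⟩,
      fun ⟨i, h⟩ => ⟨-(i + 1), by simpa [and_comm] using h⟩⟩
  ext u v
  simp only [cycleOn, fromRel_adj, key, or_comm]

lemma cycleOn_comp_mul_add (f : ZMod m → W) {δ : ZMod m} (hδ : δ = 1 ∨ δ = -1) (b : ZMod m) :
    cycleOn m (fun x => f (δ * x + b)) = cycleOn m f := by
  rcases hδ with rfl | rfl
  · simpa using cycleOn_comp_add_right f b
  · conv_rhs => rw [← cycleOn_comp_add_right f b, ← cycleOn_comp_neg]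
    simp only [neg_one_mul]

lemma eq_cycleOn_of_forall_adj {H : SimpleGraph W} (h2 : ∀ v, (H.neighborSet v).ncard = 2)
    (hm : 2 < m) {f : ZMod m → W} (hf : Bijective f) (hadj : ∀ i, H.Adj (f i) (f (i + 1))) :
    H = cycleOn m f := by
  ext a b
  obtain ⟨i, rfl⟩ := hf.2 a
  obtain ⟨j, rfl⟩ := hf.2 b
  have hN : {f (i - 1), f (i + 1)} = H.neighborSet (f i) := by
    have hne : f (i - 1) ≠ f (i + 1) := fun h =>
      ZMod.two_ne_zero_of_two_lt hm (by linear_combination -hf.1 h)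
    refine Set.eq_of_subset_of_ncard_le ?_ ?_ (Set.finite_of_ncard_pos (by rw [h2]; norm_num))
    · refine Set.insert_subset ?_ (Set.singleton_subset_iff.mpr (hadj i))
      simpa using (hadj (i - 1)).symm
    · rw [h2, Set.ncard_pair hne]
  rw [cycleOn_adj_apply (by omega) hf.1, ← mem_neighborSet, ← hN]
  simp only [Set.mem_insert_iff, Set.mem_singleton_iff, hf.1.eq_iff]
  constructor
  · rintro (rfl | rfl)
    · right; ring
    · left; ring
  · rintro (h | h)
    · right; linear_combination h
    · left; linear_combination h

end CycleOn

section HamCycle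

variable [Fintype V] {H : SimpleGraph V}

lemma IsHamCycle.exists_bijective_adj_succ (hH : IsHamCycle H) :
    ∃ m, 2 < m ∧ ∃ f : ZMod m → V, Bijective f ∧ ∀ i, H.Adj (f i) (f (i + 1)) := by
  obtain ⟨v⟩ := hH.1.nonempty
  obtain ⟨p, hp, hverts⟩ := IsCycles.exists_cycle_toSubgraph_verts_eq_connectedComponentSupp
    (fun w _ => hH.2 w) (ConnectedComponent.mem_supp_iff _ v |>.mpr rfl)
    (Set.nonempty_of_ncard_ne_zero (by rw [hH.2 v]; norm_num))
  have hL := hp.three_le_length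
  have : Fact (1 < p.length) := ⟨by omega⟩
  refine ⟨p.length, hL, fun i => p.getVert i.val, ⟨fun i j hij => ZMod.val_injective _ ?_, ?_⟩, ?_⟩
  · exact hp.getVert_injOn' (Nat.le_sub_one_of_lt i.val_lt) (Nat.le_sub_one_of_lt j.val_lt) hij
  · intro w
    have hw : w ∈ p.support := by
      rw [← Walk.mem_verts_toSubgraph, hverts, ConnectedComponent.mem_supp_iff,
        ConnectedComponent.eq]
      exact hH.1.preconnected w v
    obtain ⟨k, rfl, hk⟩ := Walk.mem_support_iff_exists_getVert.mp hw
    rcases hk.lt_or_eq with hk | rfl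
    · exact ⟨k, by dsimp only; rw [ZMod.val_natCast, Nat.mod_eq_of_lt hk]⟩
    · exact ⟨0, by simp⟩
  · intro i
    have hi := i.val_lt
    dsimp only
    rw [ZMod.val_add, ZMod.val_one]
    rcases (show i.val + 1 < p.length ∨ i.val + 1 = p.length by omega) with h | h
    · rw [Nat.mod_eq_of_lt h]
      exact p.adj_getVert_succ hi
    · rw [h, Nat.mod_self, Walk.getVert_zero]
      simpa [h] using p.adj_getVert_succ hi

lemma IsHamCycle.two_lt_card (hH : IsHamCycle H) : 2 < Fintype.card V := by
  obtain ⟨m, hm, f, hf, -⟩ := hH.exists_bijective_adj_succ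
  have : NeZero m := ⟨by omega⟩
  simpa [← Fintype.card_of_bijective hf] using hm

lemma IsHamCycle.exists_eq_cycleOn (hH : IsHamCycle H) :
    ∃ f : ZMod (Fintype.card V) ≃ V, H = cycleOn (Fintype.card V) f := by
  obtain ⟨m, hm, f, hf, hadj⟩ := hH.exists_bijective_adj_succ
  have : NeZero m := ⟨by omega⟩
  obtain rfl : m = Fintype.card V := by simpa using Fintype.card_of_bijective hf
  exact ⟨Equiv.ofBijective f hf, eq_cycleOn_of_forall_adj hH.2 hm hf hadj⟩

end HamCycle

section PermAction

variable {m : ℕ}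

lemma smul_adj_apply (σ : Equiv.Perm V) (H : SimpleGraph V) {x y : V} :
    (σ • H).Adj (σ x) (σ y) ↔ H.Adj x y :=
  map_adj_apply (f := σ.toEmbedding)

lemma adj_apply_iff_of_smul_eq {σ : Equiv.Perm V} {H : SimpleGraph V} (hσ : σ • H = H) {x y : V} :
    H.Adj (σ x) (σ y) ↔ H.Adj x y := by
  conv_lhs => rw [← hσ]
  exact smul_adj_apply σ H

lemma smul_cycleOn (σ : Equiv.Perm V) (f : ZMod m → V) : σ • cycleOn m f = cycleOn m (σ ∘ f) := by
  ext a b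
  obtain ⟨a, rfl⟩ := σ.surjective a
  obtain ⟨b, rfl⟩ := σ.surjective b
  simp [smul_adj_apply, cycleOn]

lemma apply_apply_of_orderOf_eq_two {σ : Equiv.Perm V} (hσ : orderOf σ = 2) (x : V) :
    σ (σ x) = x := by
  rw [← Equiv.Perm.mul_apply, ← sq, ← hσ, pow_orderOf_eq_one, Equiv.Perm.one_apply]

lemma exists_affine_of_smul_cycleOn (hm : 2 < m) (f : ZMod m ≃ V) {g : Equiv.Perm V}
    (hg : g • cycleOn m f = cycleOn m f) :
    ∃ δ c : ZMod m, (δ = 1 ∨ δ = -1) ∧ ∀ x, g (f x) = f (δ * x + c) := by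
  have hsucc : ∀ x, f.symm (g (f (x + 1))) - f.symm (g (f x)) = 1 ∨
      f.symm (g (f (x + 1))) - f.symm (g (f x)) = -1 := fun x => by
    rw [← cycleOn_adj_apply (by omega) f.injective, f.apply_symm_apply, f.apply_symm_apply,
      adj_apply_iff_of_smul_eq hg, cycleOn_adj_apply (by omega) f.injective]
    left; ring
  obtain ⟨δ, hδ, hψ⟩ := ZMod.exists_affine_of_injective_of_succ hm
    (f.symm.injective.comp (g.injective.comp f.injective)) hsucc
  exact ⟨δ, _, hδ, fun x => f.symm_apply_eq.mp (hψ x)⟩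

lemma exists_reflection_of_smul_cycleOn (hm : 2 < m) (hodd : Odd m) (f : ZMod m ≃ V)
    {σ : Equiv.Perm V} (hσ : σ • cycleOn m f = cycleOn m f) (hσ2 : orderOf σ = 2) :
    ∃ c, ∀ x, σ (f x) = f (c - x) := by
  obtain ⟨δ, c, rfl | rfl, hσf⟩ := exists_affine_of_smul_cycleOn hm f hσ
  · have hc : c = 0 := ZMod.eq_zero_of_two_mul_eq_zero hodd <| by
      have := apply_apply_of_orderOf_eq_two hσ2 (f 0)
      rw [hσf, hσf] at this
      linear_combination f.injective this
    have : σ = 1 := by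
      ext v
      obtain ⟨x, rfl⟩ := f.surjective v
      simp [hσf, hc]
    simp [this] at hσ2
  · exact ⟨c, fun x => by rw [hσf]; ring_nf⟩

open scoped Classical in
lemma card_adj_apply_le_two_of_reflection [Fintype V] (hm : 1 < m) (hodd : Odd m) (f : ZMod m ≃ V)
    {σ : Equiv.Perm V} {c : ZMod m} (hσ : ∀ x, σ (f x) = f (c - x)) :
    #{v | (cycleOn m f).Adj v (σ v)} ≤ 2 := by
  refine (Finset.card_le_card_of_injOn (fun v => 2 * f.symm v) (t := {c - 1, c + 1}) ?_ ?_).trans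
    Finset.card_le_two
  · intro v hv
    obtain ⟨x, rfl⟩ := f.surjective v
    simp only [Finset.coe_filter, Finset.mem_univ, true_and, Set.mem_ofPred_eq, hσ,
      cycleOn_adj_apply hm f.injective] at hv
    simp only [Finset.coe_insert, Finset.coe_singleton, Equiv.symm_apply_apply,
      Set.mem_insert_iff, Set.mem_singleton_iff]
    rcases hv with h | h
    · left; linear_combination -h
    · right; linear_combination -h
  · intro v _ w _ hvw
    exact f.symm.injective ((ZMod.isUnit_two_of_odd hodd).mul_left_cancel hvw)

lemma exists_affine_cycleOn_eq [NeZero m] {t : Equiv.Perm V} {e f : ZMod m ≃ V}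
    (he : ∀ x, t (e x) = e (x + 1)) {c : ZMod m} (hf : ∀ y, t (f y) = f (y + c)) :
    ∃ A : ZMod m ≃ᵃ[ZMod m] ZMod m, cycleOn m f = cycleOn m (e ∘ A) := by
  have hθ : ∀ x, f.symm (e (x + 1)) = f.symm (e x) + c := fun x => by
    rw [← he, f.symm_apply_eq, ← hf, f.apply_symm_apply]
  have hθ' : ∀ x, f.symm (e x) = c * x + f.symm (e 0) :=
    ZMod.eq_mul_add_of_forall_add_one (θ := fun x => f.symm (e x)) hθ
  obtain ⟨x, hx⟩ := (f.symm.surjective.comp e.surjective) (f.symm (e 0) + 1)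
  simp only [comp_apply] at hx
  have hcx : c * x = 1 := by linear_combination hx - hθ' x
  obtain ⟨A, hA⟩ := AffineEquiv.exists_apply_eq ⟨x, c, by rw [mul_comm, hcx], hcx⟩
    (-(x * f.symm (e 0)))
  refine ⟨A, congrArg (cycleOn m) (funext fun y => (f.symm_apply_eq.mp ?_).symm)⟩
  rw [comp_apply, hθ', hA, Units.val_mk]
  linear_combination (y - f.symm (e 0)) * hcx

def affineConj (e : ZMod m ≃ V) : (ZMod m ≃ᵃ[ZMod m] ZMod m) →* Equiv.Perm V where
  toFun A := e.permCongr A.toEquiv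
  map_one' := by ext; simp
  map_mul' A B := by ext; simp

lemma affineConj_apply (e : ZMod m ≃ V) (A : ZMod m ≃ᵃ[ZMod m] ZMod m) (x : ZMod m) :
    affineConj e A (e x) = e (A x) := by
  simp [affineConj]

lemma affineConj_injective (e : ZMod m ≃ V) : Injective (affineConj e) := fun A B hAB =>
  AffineEquiv.ext fun x => e.injective <| by rw [← affineConj_apply, hAB, affineConj_apply]

end PermAction

section AutHCS

variable {𝓗 : Set (SimpleGraph V)}

lemma smul_mem_of_mem_autHCS {g : Equiv.Perm V} (hg : g ∈ autHCS 𝓗) {H : SimpleGraph V}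
    (hH : H ∈ 𝓗) : g • H ∈ 𝓗 := by
  rw [← MulAction.mem_stabilizer_iff.mp hg]
  exact Set.smul_mem_smul_set hH

lemma mem_autHCS_of_forall_smul_mem [Finite V] {g : Equiv.Perm V}
    (hg : ∀ H ∈ 𝓗, g • H ∈ 𝓗) : g ∈ autHCS 𝓗 :=
  MulAction.mem_stabilizer_iff.mpr <| Set.eq_of_subset_of_ncard_le
    (Set.smul_set_subset_iff.mpr hg) (Set.ncard_smul_set g 𝓗).ge

end AutHCS

section HCS

variable [Fintype V] {𝓗 : Set (SimpleGraph V)}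

lemma IsHCS.existsUnique_adj (h : IsHCS 𝓗) {x y : V} (hxy : x ≠ y) :
    ∃! H, H ∈ 𝓗 ∧ H.Adj x y := by
  simpa using h.2 s(x, y) (by simpa using hxy)

lemma IsHCS.two_lt_card (h : IsHCS 𝓗) [Nontrivial V] : 2 < Fintype.card V := by
  obtain ⟨x, y, hxy⟩ := exists_pair_ne V
  obtain ⟨H, ⟨hH, -⟩, -⟩ := h.existsUnique_adj hxy
  exact (h.1 H hH).two_lt_card

lemma IsHCS.smul_eq_self_of_adj (h : IsHCS 𝓗) {g : Equiv.Perm V} (hg : g ∈ autHCS 𝓗)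
    {H : SimpleGraph V} (hH : H ∈ 𝓗) {x y : V} (hxy : H.Adj x y) (hgxy : H.Adj (g x) (g y)) :
    g • H = H :=
  (h.existsUnique_adj hgxy.ne).unique ⟨smul_mem_of_mem_autHCS hg hH, (smul_adj_apply g H).mpr hxy⟩
    ⟨hH, hgxy⟩

lemma IsHCS.eq_one_of_apply_eq_self (h : IsHCS 𝓗) {g : Equiv.Perm V} (hg : g ∈ autHCS 𝓗)
    {u w : V} (huw : u ≠ w) (hu : g u = u) (hw : g w = w) : g = 1 := by
  obtain ⟨H, ⟨hH, hadj⟩, -⟩ := h.existsUnique_adj huw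
  have hgH : g • H = H := h.smul_eq_self_of_adj hg hH hadj (by rwa [hu, hw])
  have hm := (h.1 H hH).two_lt_card
  obtain ⟨f, rfl⟩ := (h.1 H hH).exists_eq_cycleOn
  obtain ⟨δ, c, -, hgf⟩ := exists_affine_of_smul_cycleOn hm f hgH
  obtain ⟨i, rfl⟩ := f.surjective u
  obtain ⟨j, rfl⟩ := f.surjective w
  have hi : δ * i + c = i := f.injective (by rw [← hgf, hu])
  have hj : δ * j + c = j := f.injective (by rw [← hgf, hw])
  have hδ : δ = 1 := by
    rcases (cycleOn_adj_apply (by omega) f.injective).mp hadj with h' | h'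
    · linear_combination hj - hi - (δ - 1) * h'
    · linear_combination hi - hj + (δ - 1) * h'
  have hc : c = 0 := by linear_combination hi - i * hδ
  ext v
  obtain ⟨x, rfl⟩ := f.surjective v
  simp [hgf, hδ, hc]

open scoped Classical in
lemma IsHCS.sum_card_filter_adj (h : IsHCS 𝓗) (A : Finset V) (φ : V → V)
    (hφ : ∀ x ∈ A, φ x ≠ x) :
    ∑ H ∈ (Set.toFinite 𝓗).toFinset, #{x ∈ A | H.Adj x (φ x)} = #A := by
  simp_rw [Finset.card_filter]
  rw [Finset.sum_comm, Finset.card_eq_sum_ones]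
  refine Finset.sum_congr rfl fun x hx => ?_
  rw [← Finset.card_filter, Finset.card_eq_one]
  obtain ⟨H, hH, huniq⟩ := h.existsUnique_adj (hφ x hx).symm
  refine ⟨H, Finset.ext fun K => ?_⟩
  simp only [Finset.mem_filter, Set.Finite.mem_toFinset, Finset.mem_singleton]
  exact ⟨fun hK => huniq K hK, by rintro rfl; exact hH⟩

open scoped Classical in
lemma IsHCS.two_mul_card_add_one (h : IsHCS 𝓗) [Nonempty V] :
    2 * #(Set.toFinite 𝓗).toFinset + 1 = Fintype.card V := by
  obtain ⟨a⟩ := ‹Nonempty V›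
  have hsum := h.sum_card_filter_adj (Finset.univ.erase a) (fun _ => a)
    (fun x hx => (Finset.ne_of_mem_erase hx).symm)
  have hdeg : ∀ H ∈ (Set.toFinite 𝓗).toFinset, #{x ∈ Finset.univ.erase a | H.Adj x a} = 2 := by
    intro H hH
    rw [← (h.1 H ((Set.toFinite 𝓗).mem_toFinset.mp hH)).2 a, ← Set.ncard_coe_finset]
    congr 1
    ext x
    simpa [adj_comm] using fun hx => hx.ne'
  rw [Finset.sum_congr rfl hdeg, Finset.sum_const, smul_eq_mul,
    Finset.card_erase_of_mem (Finset.mem_univ a), Finset.card_univ] at hsum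
  have := Fintype.card_pos (α := V)
  omega

lemma IsHCS.smul_eq_self_of_adj_apply (h : IsHCS 𝓗) {σ : Equiv.Perm V} (hσ : σ ∈ autHCS 𝓗)
    (hσ2 : orderOf σ = 2) {H : SimpleGraph V} (hH : H ∈ 𝓗) {x : V} (hx : H.Adj x (σ x)) :
    σ • H = H :=
  h.smul_eq_self_of_adj hσ hH hx (by rw [apply_apply_of_orderOf_eq_two hσ2]; exact hx.symm)

open scoped Classical in
lemma IsHCS.card_adj_apply_eq_zero (h : IsHCS 𝓗) {σ : Equiv.Perm V} (hσ : σ ∈ autHCS 𝓗)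
    (hσ2 : orderOf σ = 2) {H : SimpleGraph V} (hH : H ∈ 𝓗) (hσH : σ • H ≠ H) :
    #{x | H.Adj x (σ x)} = 0 :=
  Finset.card_eq_zero.mpr <| Finset.filter_eq_empty_iff.mpr fun _ _ hx =>
    hσH (h.smul_eq_self_of_adj_apply hσ hσ2 hH hx)

open scoped Classical in
lemma IsHCS.card_adj_apply_le_two (h : IsHCS 𝓗) (hodd : Odd (Fintype.card V))
    {σ : Equiv.Perm V} (hσ : σ ∈ autHCS 𝓗) (hσ2 : orderOf σ = 2) {H : SimpleGraph V}
    (hH : H ∈ 𝓗) : #{x | H.Adj x (σ x)} ≤ 2 := by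
  by_cases hσH : σ • H = H
  · have hm := (h.1 H hH).two_lt_card
    obtain ⟨f, rfl⟩ := (h.1 H hH).exists_eq_cycleOn
    obtain ⟨c, hc⟩ := exists_reflection_of_smul_cycleOn hm hodd f hσH hσ2
    exact card_adj_apply_le_two_of_reflection (by omega) hodd f hc
  · rw [h.card_adj_apply_eq_zero hσ hσ2 hH hσH]
    norm_num

open scoped Classical in
theorem IsHCS.smul_eq_self_of_orderOf_eq_two (h : IsHCS 𝓗) (hodd : Odd (Fintype.card V))
    {σ : Equiv.Perm V} (hσ : σ ∈ autHCS 𝓗) (hσ2 : orderOf σ = 2) {H : SimpleGraph V}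
    (hH : H ∈ 𝓗) : σ • H = H := by
  obtain ⟨a, ha⟩ := Equiv.Perm.exists_fixed_point_of_prime (p := 2) (n := 1)
    (by rwa [← even_iff_two_dvd, Nat.not_even_iff_odd]) (by rw [pow_one, ← hσ2, pow_orderOf_eq_one])
  have hmoved : ∀ x ∈ Finset.univ.erase a, σ x ≠ x := fun x hx hx' => by
    simp [h.eq_one_of_apply_eq_self hσ (Finset.ne_of_mem_erase hx) hx' ha] at hσ2
  have hsum := h.sum_card_filter_adj _ σ hmoved
  have : Nonempty V := ⟨a⟩
  have hcard := h.two_mul_card_add_one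
  have hsub : ∀ K : SimpleGraph V,
      #{x ∈ Finset.univ.erase a | K.Adj x (σ x)} ≤ #{x | K.Adj x (σ x)} := fun K =>
    Finset.card_le_card (Finset.filter_subset_filter _ (Finset.subset_univ _))
  by_contra hne
  have hlt : ∑ K ∈ (Set.toFinite 𝓗).toFinset, #{x ∈ Finset.univ.erase a | K.Adj x (σ x)} <
      ∑ K ∈ (Set.toFinite 𝓗).toFinset, 2 :=
    Finset.sum_lt_sum
      (fun K hK => (hsub K).trans
        (h.card_adj_apply_le_two hodd hσ hσ2 ((Set.toFinite 𝓗).mem_toFinset.mp hK)))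
      ⟨H, (Set.toFinite 𝓗).mem_toFinset.mpr hH,
        (hsub H).trans_lt (by rw [h.card_adj_apply_eq_zero hσ hσ2 hH hne]; norm_num)⟩
  rw [hsum, Finset.sum_const, smul_eq_mul, Finset.card_erase_of_mem (Finset.mem_univ a),
    Finset.card_univ] at hlt
  omega

lemma IsHCS.exists_eq_cycleOn_mul_apply_eq_add (h : IsHCS 𝓗) (hodd : Odd (Fintype.card V))
    {σ τ : Equiv.Perm V} (hσ : σ ∈ autHCS 𝓗) (hσ2 : orderOf σ = 2) (hτ : τ ∈ autHCS 𝓗)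
    (hτ2 : orderOf τ = 2) {H : SimpleGraph V} (hH : H ∈ 𝓗) :
    ∃ f : ZMod (Fintype.card V) ≃ V, H = cycleOn _ f ∧ ∃ c, ∀ x, (σ * τ) (f x) = f (x + c) := by
  have hm := (h.1 H hH).two_lt_card
  obtain ⟨f, rfl⟩ := (h.1 H hH).exists_eq_cycleOn
  obtain ⟨c₁, hc₁⟩ := exists_reflection_of_smul_cycleOn hm hodd f
    (h.smul_eq_self_of_orderOf_eq_two hodd hσ hσ2 hH) hσ2
  obtain ⟨c₂, hc₂⟩ := exists_reflection_of_smul_cycleOn hm hodd f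
    (h.smul_eq_self_of_orderOf_eq_two hodd hτ hτ2 hH) hτ2
  exact ⟨f, rfl, c₁ - c₂, fun x => by rw [Equiv.Perm.mul_apply, hc₂, hc₁]; ring_nf⟩

lemma IsHCS.exists_equiv_mul_apply_eq_add_one (h : IsHCS 𝓗) (hodd : Odd (Fintype.card V))
    {σ τ : Equiv.Perm V} (hσ : σ ∈ autHCS 𝓗) (hσ2 : orderOf σ = 2) (hτ : τ ∈ autHCS 𝓗)
    (hτ2 : orderOf τ = 2) (hστ : σ ≠ τ) :
    ∃ e : ZMod (Fintype.card V) ≃ V, ∀ x, (σ * τ) (e x) = e (x + 1) := by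
  have hne : σ * τ ≠ 1 := fun h1 => hστ <| by
    rw [mul_eq_one_iff_eq_inv.mp h1, inv_eq_of_mul_eq_one_left]
    rw [← sq, ← hτ2, pow_orderOf_eq_one]
  obtain ⟨v, hv⟩ : ∃ v, (σ * τ) v ≠ v := by
    by_contra! hfix
    exact hne (Equiv.ext hfix)
  obtain ⟨H, ⟨hH, hadj⟩, -⟩ := h.existsUnique_adj hv.symm
  have hm := (h.1 H hH).two_lt_card
  obtain ⟨f, rfl, c, hc⟩ := h.exists_eq_cycleOn_mul_apply_eq_add hodd hσ hσ2 hτ hτ2 hH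
  obtain ⟨i, rfl⟩ := f.surjective v
  rw [hc, cycleOn_adj_apply (by omega) f.injective, add_sub_cancel_left] at hadj
  have hcc : c * c = 1 := by rcases hadj with rfl | rfl <;> ring
  refine ⟨(Units.mulLeft ⟨c, c, hcc, hcc⟩).trans f, fun x => ?_⟩
  simp only [Equiv.trans_apply, Units.mulLeft_apply, hc]
  ring_nf

lemma IsHCS.exists_affine_of_mem (h : IsHCS 𝓗) (hodd : Odd (Fintype.card V))
    {σ τ : Equiv.Perm V} (hσ : σ ∈ autHCS 𝓗) (hσ2 : orderOf σ = 2) (hτ : τ ∈ autHCS 𝓗)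
    (hτ2 : orderOf τ = 2) {e : ZMod (Fintype.card V) ≃ V} (he : ∀ x, (σ * τ) (e x) = e (x + 1))
    {H : SimpleGraph V} (hH : H ∈ 𝓗) :
    ∃ A : ZMod (Fintype.card V) ≃ᵃ[ZMod (Fintype.card V)] ZMod (Fintype.card V),
      H = cycleOn _ (e ∘ A) := by
  have : NeZero (Fintype.card V) := ⟨by have := (h.1 H hH).two_lt_card; omega⟩
  obtain ⟨f, rfl, c, hc⟩ := h.exists_eq_cycleOn_mul_apply_eq_add hodd hσ hσ2 hτ hτ2 hH
  exact exists_affine_cycleOn_eq he hc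

lemma IsHCS.cycleOn_mem (h : IsHCS 𝓗) (hm : 2 < Fintype.card V) (hodd : Odd (Fintype.card V))
    {σ τ : Equiv.Perm V} (hσ : σ ∈ autHCS 𝓗) (hσ2 : orderOf σ = 2) (hτ : τ ∈ autHCS 𝓗)
    (hτ2 : orderOf τ = 2) {e : ZMod (Fintype.card V) ≃ V} (he : ∀ x, (σ * τ) (e x) = e (x + 1))
    (A : ZMod (Fintype.card V) ≃ᵃ[ZMod (Fintype.card V)] ZMod (Fintype.card V)) :
    cycleOn _ (e ∘ A) ∈ 𝓗 := by
  have : Fact (1 < Fintype.card V) := ⟨by omega⟩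
  obtain ⟨K, ⟨hK, hadj⟩, -⟩ := h.existsUnique_adj (e.injective.ne (A.injective.ne zero_ne_one))
  obtain ⟨B, rfl⟩ := h.exists_affine_of_mem hodd hσ hσ2 hτ hτ2 he hK
  set C := B⁻¹ * A
  obtain ⟨a, ha⟩ := C.exists_units_apply_eq
  have hBC : ∀ x, A x = B (C x) := fun x => (B.apply_symm_apply (A x)).symm
  have hδ : (a : ZMod (Fintype.card V)) = 1 ∨ (a : ZMod (Fintype.card V)) = -1 := by
    rw [hBC 0, hBC 1] at hadj
    have := (cycleOn_adj_apply (by omega) (e.injective.comp B.injective)).mp hadj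
    rwa [ha 1, mul_one, add_sub_cancel_right] at this
  have : e ∘ A = fun x => (e ∘ B) (a * x + C 0) := funext fun x => by
    rw [comp_apply, hBC, ← ha]; rfl
  rwa [this, cycleOn_comp_mul_add _ hδ]

lemma IsHCS.isUnit_of_ne_zero (h : IsHCS 𝓗) (hm : 1 < Fintype.card V)
    {e : ZMod (Fintype.card V) ≃ V}
    (hmem : ∀ H ∈ 𝓗, ∃ A : ZMod (Fintype.card V) ≃ᵃ[ZMod (Fintype.card V)] ZMod (Fintype.card V),
      H = cycleOn _ (e ∘ A))
    {x : ZMod (Fintype.card V)} (hx : x ≠ 0) : IsUnit x := by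
  obtain ⟨K, ⟨hK, hadj⟩, -⟩ := h.existsUnique_adj (e.injective.ne hx.symm)
  obtain ⟨A, rfl⟩ := hmem K hK
  obtain ⟨a, ha⟩ := A.exists_units_apply_eq
  have hA : ∀ y, e y = (e ∘ A) (A.symm y) := fun y => by simp
  rw [hA 0, hA x, cycleOn_adj_apply hm (e.injective.comp A.injective)] at hadj
  have hx' : x = a * (A.symm x - A.symm 0) := by
    have h1 := ha (A.symm x)
    have h0 := ha (A.symm 0)
    simp only [AffineEquiv.apply_symm_apply] at h1 h0
    linear_combination h1 - h0
  rcases hadj with h' | h' <;> rw [hx', h'] <;> simp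

theorem IsHCS.nonempty_mulEquiv_affineEquiv (h : IsHCS 𝓗) {p : ℕ} [Fact p.Prime] (e : ZMod p ≃ V)
    (hmem : ∀ H, H ∈ 𝓗 ↔ ∃ A : ZMod p ≃ᵃ[ZMod p] ZMod p, H = cycleOn p (e ∘ A)) :
    Nonempty (autHCS 𝓗 ≃* (ZMod p ≃ᵃ[ZMod p] ZMod p)) := by
  have hconj : ∀ A, affineConj e A ∈ autHCS 𝓗 := fun A =>
    mem_autHCS_of_forall_smul_mem fun H hH => by
      obtain ⟨B, rfl⟩ := (hmem H).mp hH
      refine (hmem _).mpr ⟨A * B, ?_⟩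
      rw [smul_cycleOn]
      congr 1
      ext x
      simp [affineConj_apply]
  have hrange : (affineConj e).range = autHCS 𝓗 := by
    refine le_antisymm (by rintro _ ⟨A, rfl⟩; exact hconj A) fun g hg => ?_
    set g' : ZMod p → ZMod p := fun x => e.symm (g (e x))
    have hne : g' 1 - g' 0 ≠ 0 := sub_ne_zero.mpr fun h10 =>
      one_ne_zero (e.injective (g.injective (e.symm.injective h10)))
    obtain ⟨A, hA⟩ := AffineEquiv.exists_apply_eq (Units.mk0 _ hne) (g' 0)
    have hfix : ∀ x, x = 0 ∨ x = 1 → ((affineConj e A)⁻¹ * g) (e x) = e x := by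
      rintro x (rfl | rfl) <;>
        simp [Equiv.Perm.inv_def, Equiv.symm_apply_eq, affineConj_apply, hA, g']
    exact ⟨A, inv_mul_eq_one.mp (h.eq_one_of_apply_eq_self
      (Subgroup.mul_mem _ (Subgroup.inv_mem _ (hconj A)) hg) (e.injective.ne zero_ne_one)
      (hfix 0 (Or.inl rfl)) (hfix 1 (Or.inr rfl)))⟩
  exact ⟨((MonoidHom.ofInjective (affineConj_injective e)).trans
    (MulEquiv.subgroupCongr hrange)).symm⟩

theorem IsHCS.prime_and_nonempty_mulEquiv (h : IsHCS 𝓗) (hodd : Odd (Fintype.card V))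
    {σ τ : Equiv.Perm V} (hσ : σ ∈ autHCS 𝓗) (hσ2 : orderOf σ = 2) (hτ : τ ∈ autHCS 𝓗)
    (hτ2 : orderOf τ = 2) (hστ : σ ≠ τ) :
    (Fintype.card V).Prime ∧ Nonempty (autHCS 𝓗 ≃*
      (ZMod (Fintype.card V) ≃ᵃ[ZMod (Fintype.card V)] ZMod (Fintype.card V))) := by
  have : Nontrivial V := by
    by_contra hV
    rw [not_nontrivial_iff_subsingleton] at hV
    simp [Subsingleton.elim σ 1] at hσ2
  have hm := h.two_lt_card
  obtain ⟨e, he⟩ := h.exists_equiv_mul_apply_eq_add_one hodd hσ hσ2 hτ hτ2 hστ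
  have hmem : ∀ H, H ∈ 𝓗 ↔ ∃ A : ZMod (Fintype.card V) ≃ᵃ[ZMod (Fintype.card V)]
      ZMod (Fintype.card V), H = cycleOn _ (e ∘ A) := fun H =>
    ⟨h.exists_affine_of_mem hodd hσ hσ2 hτ hτ2 he, by
      rintro ⟨A, rfl⟩
      exact h.cycleOn_mem hm hodd hσ hσ2 hτ hτ2 he A⟩
  have hp := ZMod.prime_of_forall_ne_zero_isUnit (by omega) fun x hx =>
    h.isUnit_of_ne_zero (by omega) (fun H hH => (hmem H).mp hH) hx
  have : Fact (Fintype.card V).Prime := ⟨hp⟩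
  exact ⟨hp, h.nonempty_mulEquiv_affineEquiv e hmem⟩

end HCS

/-- if the full automorphism group of an HCS of order `2n+1` has even order,
then it has a unique involution, or `2n+1` is prime and the group is `AGL(1, 2n+1)`. -/
theorem even_aut_binary_or_agl [Fintype V] (n : ℕ) (hV : Fintype.card V = 2 * n + 1)
    (𝓗 : Set (SimpleGraph V)) (h : IsHCS 𝓗)
    (heven : Even (Nat.card (autHCS 𝓗))) :
    (∃! σ : Equiv.Perm V, σ ∈ autHCS 𝓗 ∧ orderOf σ = 2) ∨
      ((2 * n + 1).Prime ∧ Nonempty ((autHCS 𝓗) ≃*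
        (ZMod (2*n+1) ≃ᵃ[ZMod (2*n+1)] ZMod (2*n+1)))) := by
  obtain ⟨⟨σ, hσ⟩, hσ2⟩ := exists_prime_orderOf_dvd_card' 2 heven.two_dvd
  rw [← Subgroup.orderOf_coe] at hσ2
  by_cases hother : ∃ τ ∈ autHCS 𝓗, orderOf τ = 2 ∧ τ ≠ σ
  · obtain ⟨τ, hτ, hτ2, hτσ⟩ := hother
    obtain ⟨hp, ⟨φ⟩⟩ := h.prime_and_nonempty_mulEquiv (hV ▸ odd_two_mul_add_one n) hσ hσ2 hτ hτ2
      hτσ.symm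
    rw [hV] at hp φ
    exact Or.inr ⟨hp, ⟨φ⟩⟩
  · exact Or.inl ⟨σ, ⟨hσ, hσ2⟩, fun τ ⟨hτ, hτ2⟩ => by_contra fun hτσ => hother ⟨τ, hτ, hτ2, hτσ⟩⟩
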